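/- arXiv:1204.2604 — 7 statements merged into one kernel-verified Lean document; each statement's English description precedes it below -/
import Mathlib

section
/- For every connected simple graph G on n vertices, the vertex-forwarding index satisfies n·ξ(G) ≥ Σ_{u∈V} Σ_{v∈V, v≠u} (d_G(u,v) − 1), where d_G(u,v) denotes the graph distance between u and v; that is, ξ(G) is at least the average A(G) = (1/n)·Σ_{u∈V} Σ_{v≠u} (d_G(u,v) − 1). -/
open Finset

namespace Forwarding

variable {V : Type*} [Fintype V] [DecidableEq V]

/-- A routing of a graph `G`: for every ordered pair of vertices, a fixed path.
(For `x = y` the path condition forces the trivial walk, so only the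
`n(n-1)` paths between distinct vertices matter.) -/
structure Routing (G : SimpleGraph V) where
  walk : ∀ x y : V, G.Walk x y
  isPath : ∀ x y : V, (walk x y).IsPath

/-- A routing is minimal if every specified path is a shortest path. -/
def Routing.IsMinimal {G : SimpleGraph V} (R : Routing G) : Prop :=
  ∀ x y : V, (R.walk x y).length = G.dist x y

/-- The load of a vertex `x`: the number of paths of the routing passing
through `x` as an internal vertex. -/
def vertexLoad {G : SimpleGraph V} (R : Routing G) (x : V) : ℕ :=
  (univ.filter fun p : V × V =>
    p.1 ≠ p.2 ∧ x ∈ (R.walk p.1 p.2).support ∧ x ≠ p.1 ∧ x ≠ p.2).card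

/-- The load of an edge `e`: the number of paths of the routing traversing `e`. -/
def edgeLoad {G : SimpleGraph V} (R : Routing G) (e : Sym2 V) : ℕ :=
  (univ.filter fun p : V × V => p.1 ≠ p.2 ∧ e ∈ (R.walk p.1 p.2).edges).card

/-- `ξ(G,R)`: the maximum vertex load of the routing `R`. -/
def routingVertexIndex {G : SimpleGraph V} (R : Routing G) : ℕ :=
  univ.sup (vertexLoad R)

/-- `π(G,R)`: the maximum edge load of the routing `R`. (Edges not in `G`
carry load `0`, so taking the `sup` over all of `Sym2 V` is equivalent.) -/
def routingEdgeIndex {G : SimpleGraph V} (R : Routing G) : ℕ :=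
  univ.sup (edgeLoad R)

/-- The vertex-forwarding index `ξ(G)`. -/
noncomputable def xi (G : SimpleGraph V) : ℕ :=
  sInf { k | ∃ R : Routing G, routingVertexIndex R = k }

/-- The vertex-forwarding index over minimal routings, `ξ_m(G)`. -/
noncomputable def xiMin (G : SimpleGraph V) : ℕ :=
  sInf { k | ∃ R : Routing G, R.IsMinimal ∧ routingVertexIndex R = k }

/-- The edge-forwarding index `π(G)`. -/
noncomputable def piIdx (G : SimpleGraph V) : ℕ :=
  sInf { k | ∃ R : Routing G, routingEdgeIndex R = k }

/-- The edge-forwarding index over minimal routings, `π_m(G)`. -/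
noncomputable def piMinIdx (G : SimpleGraph V) : ℕ :=
  sInf { k | ∃ R : Routing G, R.IsMinimal ∧ routingEdgeIndex R = k }

end Forwarding

/-! Summing the loads counts every vertex of every path `R(u,v)` except its two ends, i.e.
`d(u,v) - 1` vertices at least for each ordered pair; on the other hand the total load is at
most `n · ξ(G,R)`, and an optimal routing exists because `G` is connected. -/

theorem SimpleGraph.Walk.IsPath.card_filter_mem_support_ne_ne {V : Type*} [Fintype V]
    [DecidableEq V] {G : SimpleGraph V} {u v : V} {p : G.Walk u v} (hp : p.IsPath)
    (huv : u ≠ v) : #{x | x ∈ p.support ∧ x ≠ u ∧ x ≠ v} = p.length - 1 := by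
  have hinternal : ({x | x ∈ p.support ∧ x ≠ u ∧ x ≠ v} : Finset V)
      = p.support.toFinset \ {u, v} := by
    ext x
    simp
  have hends : ({u, v} : Finset V) ⊆ p.support.toFinset := by
    simp [insert_subset_iff]
  rw [hinternal, card_sdiff_of_subset hends, List.toFinset_card_of_nodup hp.support_nodup,
    p.length_support, card_pair huv]
  omega

namespace Forwarding

variable {V : Type*} [Fintype V] [DecidableEq V] {G : SimpleGraph V}

theorem sum_vertexLoad (R : Routing G) :
    ∑ x, vertexLoad R x = ∑ u, ∑ v ∈ univ.erase u, ((R.walk u v).length - 1) := by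
  let passesThrough : V → V × V → Prop := fun x p =>
    p.1 ≠ p.2 ∧ x ∈ (R.walk p.1 p.2).support ∧ x ≠ p.1 ∧ x ≠ p.2
  calc ∑ x, vertexLoad R x
      = ∑ x, #(univ.bipartiteAbove passesThrough x) := rfl
    _ = ∑ p : V × V, #(univ.bipartiteBelow passesThrough p) :=
        sum_card_bipartiteAbove_eq_sum_card_bipartiteBelow _
    _ = ∑ u, ∑ v ∈ univ.erase u, #(univ.bipartiteBelow passesThrough (u, v)) := by
        rw [Fintype.sum_prod_type]
        refine sum_congr rfl fun u _ => (sum_erase _ ?_).symm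
        simp [bipartiteBelow, passesThrough]
    _ = _ := by
        refine sum_congr rfl fun u _ => sum_congr rfl fun v hv => ?_
        have huv : u ≠ v := (ne_of_mem_erase hv).symm
        rw [← (R.isPath u v).card_filter_mem_support_ne_ne huv]
        simp [bipartiteBelow, passesThrough, huv]

theorem sum_dist_sub_one_le_card_mul_routingVertexIndex (R : Routing G) :
    ∑ u, ∑ v ∈ univ.erase u, (G.dist u v - 1) ≤ Fintype.card V * routingVertexIndex R :=
  calc ∑ u, ∑ v ∈ univ.erase u, (G.dist u v - 1)
      ≤ ∑ u, ∑ v ∈ univ.erase u, ((R.walk u v).length - 1) :=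
        sum_le_sum fun u _ => sum_le_sum fun v _ => Nat.sub_le_sub_right (G.dist_le _) 1
    _ = ∑ x, vertexLoad R x := (sum_vertexLoad R).symm
    _ ≤ Fintype.card V * routingVertexIndex R := by
        simpa using sum_le_card_nsmul univ _ (routingVertexIndex R) fun x _ =>
          le_sup (f := vertexLoad R) (mem_univ x)

theorem exists_routingVertexIndex_eq_xi (hG : G.Connected) :
    ∃ R : Routing G, routingVertexIndex R = xi G := by
  let R : Routing G :=
    ⟨fun x y => ((hG x y).some.toPath : G.Path x y), fun x y => ((hG x y).some.toPath).2⟩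
  exact Nat.sInf_mem (s := {k | ∃ R : Routing G, routingVertexIndex R = k}) ⟨_, R, rfl⟩

end Forwarding

/-- For every connected simple graph `G` on `n` vertices,
`n * ξ(G) ≥ Σ_{u} Σ_{v ≠ u} (d_G(u,v) - 1)`. -/
theorem vertex_forwarding_lower_bound {V : Type*} [Fintype V] [DecidableEq V]
    (G : SimpleGraph V) (hG : G.Connected) :
    ∑ u : V, ∑ v ∈ Finset.univ.erase u, (G.dist u v - 1) ≤
      Fintype.card V * Forwarding.xi G := by
  obtain ⟨R, hR⟩ := Forwarding.exists_routingVertexIndex_eq_xi hG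
  exact hR ▸ Forwarding.sum_dist_sub_one_le_card_mul_routingVertexIndex R
end

section
/- For every connected simple graph G on n vertices, the vertex-forwarding index satisfies ξ(G) ≤ (n−1)(n−2). -/
open Finset

/-! A path with `x` as an internal vertex has both endpoints in `V ∖ {x}`, so in *any* routing the
load of `x` is at most the number `(n-1)(n-2)` of ordered pairs of distinct vertices of `V ∖ {x}`;
and a connected graph has a routing. -/

namespace Forwarding

variable {V : Type*} [Fintype V] [DecidableEq V]

lemma card_offDiag_compl_singleton (x : V) :
    ({x}ᶜ : Finset V).offDiag.card = (Fintype.card V - 1) * (Fintype.card V - 2) := by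
  rw [offDiag_card, card_compl, card_singleton, ← Nat.mul_sub_one, Nat.sub_sub]

lemma vertexLoad_le {G : SimpleGraph V} (R : Routing G) (x : V) :
    vertexLoad R x ≤ (Fintype.card V - 1) * (Fintype.card V - 2) := by
  rw [← card_offDiag_compl_singleton x]
  refine card_le_card fun p hp => ?_
  obtain ⟨hne, -, hx₁, hx₂⟩ := (mem_filter.mp hp).2
  simpa [mem_offDiag] using ⟨Ne.symm hx₁, Ne.symm hx₂, hne⟩

lemma routingVertexIndex_le {G : SimpleGraph V} (R : Routing G) :
    routingVertexIndex R ≤ (Fintype.card V - 1) * (Fintype.card V - 2) :=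
  Finset.sup_le fun x _ => vertexLoad_le R x

lemma xi_le_routingVertexIndex {G : SimpleGraph V} (R : Routing G) :
    xi G ≤ routingVertexIndex R :=
  Nat.sInf_le ⟨R, rfl⟩

noncomputable def Routing.ofPreconnected {G : SimpleGraph V} (hG : G.Preconnected) : Routing G where
  walk x y := (hG x y).some.toPath
  isPath x y := (hG x y).some.toPath.2

end Forwarding

/-- For every connected simple graph `G` on `n` vertices,
`ξ(G) ≤ (n-1)(n-2)`. -/
theorem vertex_forwarding_upper_bound {V : Type*} [Fintype V] [DecidableEq V]
    (G : SimpleGraph V) (hG : G.Connected) :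
    Forwarding.xi G ≤ (Fintype.card V - 1) * (Fintype.card V - 2) :=
  (Forwarding.xi_le_routingVertexIndex (.ofPreconnected hG.preconnected)).trans
    (Forwarding.routingVertexIndex_le _)
end

section
/- For every connected simple graph G on n vertices, the edge-forwarding index satisfies π(G) ≤ ⌊n²/2⌋. -/
open Finset

/-!
In a routing by shortest paths, a path that traverses the edge `uv` from `u` to `v` starts at a
vertex strictly closer to `u` than to `v` and ends at a vertex strictly closer to `v` than to `u`.
These two vertex sets `A` and `B` are disjoint, so the load of `uv` is at most
`2|A||B| ≤ (|A| + |B|)² / 2 ≤ n² / 2`.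
-/

lemma Finset.card_product_union_product_le {α : Type*} [Fintype α] [DecidableEq α]
    {A B : Finset α} (h : Disjoint A B) : #(A ×ˢ B ∪ B ×ˢ A) ≤ Fintype.card α ^ 2 / 2 := by
  have hAB : #A + #B ≤ Fintype.card α := by
    rw [← card_union_of_disjoint h]
    exact card_le_univ _
  calc _ ≤ #A * #B + #B * #A := by
        simpa only [card_product] using card_union_le (A ×ˢ B) (B ×ˢ A)
    _ ≤ Fintype.card α ^ 2 / 2 := by
        rw [Nat.le_div_iff_mul_le two_pos]
        nlinarith [sq_nonneg ((#A : ℤ) - #B)]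

namespace SimpleGraph

variable {V : Type*} {G : SimpleGraph V}

namespace Walk

variable {x y : V} {p : G.Walk x y}

lemma dist_snd_add_one_of_mem_darts (hp : p.length = G.dist x y) {d : G.Dart}
    (hd : d ∈ p.darts) : G.dist d.snd y + 1 = G.dist d.fst y := by
  induction p with
  | nil => simp at hd
  | @cons x w y h q ih =>
    rw [length_cons] at hp
    have hq : q.length = G.dist w y := by
      have := dist_le q
      have : G.dist x y ≤ G.dist x w + G.dist w y := q.reachable.dist_triangle_right x
      have : G.dist x w = 1 := dist_eq_one_iff_adj.mpr h
      omega
    rw [darts_cons, List.mem_cons] at hd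
    rcases hd with rfl | hd
    · change G.dist w y + 1 = G.dist x y
      omega
    · exact ih hq hd

lemma dist_fst_add_one_of_mem_darts (hp : p.length = G.dist x y) {d : G.Dart}
    (hd : d ∈ p.darts) : G.dist x d.fst + 1 = G.dist x d.snd := by
  have hd' : d.symm ∈ p.reverse.darts := by
    rw [darts_reverse, List.mem_reverse]
    exact List.mem_map_of_mem hd
  have := dist_snd_add_one_of_mem_darts (p := p.reverse) (by simpa [dist_comm] using hp) hd'
  simpa [dist_comm] using this

end Walk

variable [Fintype V]

noncomputable def closerTo (G : SimpleGraph V) (u v : V) : Finset V :=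
  {z | G.dist z u < G.dist z v}

lemma disjoint_closerTo (u v : V) : Disjoint (G.closerTo u v) (G.closerTo v u) :=
  Finset.disjoint_filter.mpr fun _ _ h => h.not_gt

lemma Walk.mem_closerTo_prod_of_mem_darts {x y : V} {p : G.Walk x y}
    (hp : p.length = G.dist x y) {d : G.Dart} (hd : d ∈ p.darts) :
    (x, y) ∈ G.closerTo d.fst d.snd ×ˢ G.closerTo d.snd d.fst := by
  have hx := dist_fst_add_one_of_mem_darts hp hd
  have hy := dist_snd_add_one_of_mem_darts hp hd
  simp only [closerTo, Finset.mem_product, Finset.mem_filter, Finset.mem_univ, true_and]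
  rw [dist_comm (u := y), dist_comm (u := y)]
  omega

lemma Walk.mem_closerTo_prod_union_of_mem_edges [DecidableEq V] {x y u v : V} {p : G.Walk x y}
    (hp : p.length = G.dist x y) (he : s(u, v) ∈ p.edges) :
    (x, y) ∈ G.closerTo u v ×ˢ G.closerTo v u ∪ G.closerTo v u ×ˢ G.closerTo u v := by
  obtain ⟨⟨⟨a, b⟩, hab⟩, hd, hde⟩ := List.mem_map.mp he
  have hmem := mem_closerTo_prod_of_mem_darts hp hd
  rw [Finset.mem_union]
  rcases Sym2.eq_iff.mp hde with ⟨rfl, rfl⟩ | ⟨rfl, rfl⟩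
  · exact .inl hmem
  · exact .inr hmem

end SimpleGraph

namespace Forwarding

lemma exists_routing_isMinimal {V : Type*} {G : SimpleGraph V} (hG : G.Connected) :
    ∃ R : Routing G, R.IsMinimal := by
  choose walk isPath length_eq using hG.exists_path_of_dist
  exact ⟨⟨walk, isPath⟩, length_eq⟩

variable {V : Type*} [Fintype V] [DecidableEq V] {G : SimpleGraph V}

lemma edgeLoad_le_of_isMinimal {R : Routing G} (hR : R.IsMinimal) (e : Sym2 V) :
    edgeLoad R e ≤ Fintype.card V ^ 2 / 2 := by
  induction e using Sym2.inductionOn with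
  | hf u v =>
    refine (card_le_card fun p hp => ?_).trans
      (card_product_union_product_le (G.disjoint_closerTo u v))
    exact (R.walk p.1 p.2).mem_closerTo_prod_union_of_mem_edges (hR p.1 p.2) (mem_filter.mp hp).2.2

end Forwarding

/-- For every connected simple graph `G` on `n` vertices,
`π(G) ≤ ⌊n² / 2⌋`. -/
theorem edge_forwarding_upper_bound {V : Type*} [Fintype V] [DecidableEq V]
    (G : SimpleGraph V) (hG : G.Connected) :
    Forwarding.piIdx G ≤ Fintype.card V ^ 2 / 2 := by
  obtain ⟨R, hR⟩ := Forwarding.exists_routing_isMinimal hG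
  calc Forwarding.piIdx G ≤ Forwarding.routingEdgeIndex R := Nat.sInf_le ⟨R, rfl⟩
    _ ≤ Fintype.card V ^ 2 / 2 :=
        Finset.sup_le fun e _ => Forwarding.edgeLoad_le_of_isMinimal hR e
end

section
/- For every connected simple graph G on n vertices, one has π(G) ≤ ξ(G) + 2(n−1). -/
/-! A path through an edge `ab` passes through `a`, so it either has `a` as an internal vertex
(at most `ξ(G,R)` such paths) or starts or ends at `a` (at most `n - 1` paths each). Hence
`π(G,R) ≤ ξ(G,R) + 2(n - 1)` for every routing `R`, and it remains to take `R` attaining `ξ(G)`. -/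

open Finset

theorem Nat.sInf_range_le_add {ι : Sort*} (f g : ι → ℕ) (c : ℕ)
    (h : ∀ i, f i ≤ g i + c) : sInf (Set.range f) ≤ sInf (Set.range g) + c := by
  cases isEmpty_or_nonempty ι with
  | inl _ => simp [Set.range_eq_empty]
  | inr _ =>
    obtain ⟨i, hi⟩ := Nat.sInf_mem (Set.range_nonempty g)
    calc sInf (Set.range f) ≤ f i := Nat.sInf_le ⟨i, rfl⟩
      _ ≤ g i + c := h i
      _ = sInf (Set.range g) + c := by rw [hi]

namespace Forwarding

variable {V : Type*} [Fintype V] [DecidableEq V] {G : SimpleGraph V}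

theorem edgeLoad_le_vertexLoad_add (R : Routing G) (a b : V) :
    edgeLoad R s(a, b) ≤ vertexLoad R a + 2 * (Fintype.card V - 1) := by
  set S := univ.filter fun p : V × V => p.1 ≠ p.2 ∧ s(a, b) ∈ (R.walk p.1 p.2).edges
  set A := univ.filter fun p : V × V =>
    p.1 ≠ p.2 ∧ a ∈ (R.walk p.1 p.2).support ∧ a ≠ p.1 ∧ a ≠ p.2
  have hS : S ⊆ A ∪ ({a} ×ˢ univ.erase a) ∪ (univ.erase a ×ˢ {a}) := by
    rintro ⟨x, y⟩ hp
    simp only [S, mem_filter, mem_univ, true_and] at hp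
    obtain ⟨hxy, hedge⟩ := hp
    have ha : a ∈ (R.walk x y).support := SimpleGraph.Walk.fst_mem_support_of_mem_edges _ hedge
    simp only [A, mem_union, mem_filter, mem_product, mem_singleton, mem_erase, mem_univ,
      true_and, and_true]
    by_cases hx : a = x
    · subst hx; exact Or.inl (Or.inr ⟨rfl, hxy.symm⟩)
    by_cases hy : a = y
    · subst hy; exact Or.inr ⟨hxy, rfl⟩
    exact Or.inl (Or.inl ⟨hxy, ha, hx, hy⟩)
  have hcard : (univ.erase a).card = Fintype.card V - 1 := card_erase_of_mem (mem_univ a)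
  calc edgeLoad R s(a, b) = S.card := rfl
    _ ≤ (A ∪ ({a} ×ˢ univ.erase a) ∪ (univ.erase a ×ˢ {a})).card := card_le_card hS
    _ ≤ A.card + ({a} ×ˢ univ.erase a).card + (univ.erase a ×ˢ {a}).card :=
      (card_union_le _ _).trans (Nat.add_le_add_right (card_union_le _ _) _)
    _ = vertexLoad R a + 2 * (Fintype.card V - 1) := by
      rw [card_product, card_product, card_singleton, hcard]; simp only [vertexLoad, A]; ring

theorem routingEdgeIndex_le_routingVertexIndex_add (R : Routing G) :
    routingEdgeIndex R ≤ routingVertexIndex R + 2 * (Fintype.card V - 1) :=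
  Finset.sup_le fun e _ => Sym2.inductionOn e fun a b =>
    (edgeLoad_le_vertexLoad_add R a b).trans (Nat.add_le_add_right (le_sup (mem_univ a)) _)

end Forwarding

theorem pi_le_xi_add_general {V : Type*} [Fintype V] [DecidableEq V]
    (G : SimpleGraph V) :
    Forwarding.piIdx G ≤ Forwarding.xi G + 2 * (Fintype.card V - 1) :=
  Nat.sInf_range_le_add _ _ _ Forwarding.routingEdgeIndex_le_routingVertexIndex_add

/-- For every connected simple graph `G` on `n` vertices,
`π(G) ≤ ξ(G) + 2(n-1)`. -/
theorem pi_le_xi_add {V : Type*} [Fintype V] [DecidableEq V]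
    (G : SimpleGraph V) (hG : G.Connected) :
    Forwarding.piIdx G ≤ Forwarding.xi G + 2 * (Fintype.card V - 1) :=
  pi_le_xi_add_general G
end

section
/- Let G and G' be connected simple graphs of orders n and n', respectively. Then the Cartesian (box) product G □ G' satisfies π(G □ G') ≤ max{n·π(G'), n'·π(G)}. -/
open Finset

/-!
Glue optimal routings `R` of `G` and `R'` of `G'` coordinatewise: route `(a, b)` to `(c, d)` along
`R a c` inside the copy `G × {b}`, then along `R' b d` inside `{c} × G'`. A `G`-edge
`(x, b) – (y, b)` is then used only by pairs `((a, b), (c, d))` with `s(x, y)` on `R a c`, at most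
`n' · π(G)` of them; symmetrically a `G'`-edge `(c, x) – (c, y)` is used only by pairs
`((a, b), (c, d))` with `s(x, y)` on `R' b d`, at most `n · π(G')` of them.
-/

open SimpleGraph

namespace SimpleGraph.Walk

variable {V V' : Type*} {G : SimpleGraph V} {G' : SimpleGraph V'}

lemma mem_edges_boxProdLeft {u v : V} {b : V'} {w : G.Walk u v} {x y : V × V'}
    (h : s(x, y) ∈ (w.boxProdLeft G' b).edges) :
    x.2 = b ∧ y.2 = b ∧ s(x.1, y.1) ∈ w.edges := by
  replace h : s(x, y) ∈ (w.map (G.boxProdLeft G' b).toHom).edges := h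
  rw [edges_map, List.mem_map] at h
  obtain ⟨e, he, hxy⟩ := h
  induction e using Sym2.ind
  simp only [Sym2.map_mk, Sym2.eq_iff, Embedding.coe_toHom, boxProdLeft_apply] at hxy
  rcases hxy with ⟨rfl, rfl⟩ | ⟨rfl, rfl⟩ <;> simp [he, Sym2.eq_swap]

lemma mem_edges_boxProdRight {u v : V'} {a : V} {w : G'.Walk u v} {x y : V × V'}
    (h : s(x, y) ∈ (w.boxProdRight G a).edges) :
    x.1 = a ∧ y.1 = a ∧ s(x.2, y.2) ∈ w.edges := by
  replace h : s(x, y) ∈ (w.map (G.boxProdRight G' a).toHom).edges := h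
  rw [edges_map, List.mem_map] at h
  obtain ⟨e, he, hxy⟩ := h
  induction e using Sym2.ind
  simp only [Sym2.map_mk, Sym2.eq_iff, Embedding.coe_toHom, boxProdRight_apply] at hxy
  rcases hxy with ⟨rfl, rfl⟩ | ⟨rfl, rfl⟩ <;> simp [he, Sym2.eq_swap]

end SimpleGraph.Walk

namespace Forwarding

variable {V V' : Type*} {G : SimpleGraph V} {G' : SimpleGraph V'}

lemma Routing.nonempty_of_connected [DecidableEq V] (hG : G.Connected) : Nonempty (Routing G) :=
  ⟨⟨fun x y => (hG.preconnected x y).some.toPath,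
    fun x y => (hG.preconnected x y).some.toPath.prop⟩⟩

lemma Routing.ne_of_mem_edges (R : Routing G) {x y : V} {e : Sym2 V}
    (h : e ∈ (R.walk x y).edges) : x ≠ y := by
  rintro rfl
  rw [Walk.edges_eq_nil.mpr (Walk.isPath_iff_nil.mp (R.isPath x x))] at h
  exact List.not_mem_nil h

section Fintype

variable [Fintype V] [DecidableEq V]

lemma edgeLoad_le_routingEdgeIndex (R : Routing G) (e : Sym2 V) :
    edgeLoad R e ≤ routingEdgeIndex R :=
  Finset.le_sup (Finset.mem_univ e)

lemma piIdx_le_routingEdgeIndex (R : Routing G) : piIdx G ≤ routingEdgeIndex R :=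
  Nat.sInf_le ⟨R, rfl⟩

lemma exists_routingEdgeIndex_eq_piIdx (hG : G.Connected) :
    ∃ R : Routing G, routingEdgeIndex R = piIdx G := by
  obtain ⟨R⟩ := Routing.nonempty_of_connected hG
  exact Nat.sInf_mem (s := {k | ∃ R : Routing G, routingEdgeIndex R = k}) ⟨_, R, rfl⟩

end Fintype

variable [DecidableEq V] [DecidableEq V']

/-- `bypass` only certifies the path property: the concatenation is already a path. -/
def Routing.boxProd (R : Routing G) (R' : Routing G') : Routing (G.boxProd G') where
  walk p q := (((R.walk p.1 q.1).boxProdLeft G' p.2).append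
    ((R'.walk p.2 q.2).boxProdRight G q.1)).bypass
  isPath _ _ := Walk.bypass_isPath _

lemma Routing.mem_edges_boxProd (R : Routing G) (R' : Routing G') {p q x y : V × V'}
    (h : s(x, y) ∈ ((R.boxProd R').walk p q).edges) :
    (x.2 = p.2 ∧ y.2 = p.2 ∧ s(x.1, y.1) ∈ (R.walk p.1 q.1).edges) ∨
      (x.1 = q.1 ∧ y.1 = q.1 ∧ s(x.2, y.2) ∈ (R'.walk p.2 q.2).edges) := by
  have h' := Walk.edges_bypass_subset_edges _ h
  rw [Walk.edges_append, List.mem_append] at h'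
  exact h'.imp Walk.mem_edges_boxProdLeft Walk.mem_edges_boxProdRight

variable [Fintype V] [Fintype V']

lemma edgeLoad_boxProd_le_of_snd_eq (R : Routing G) (R' : Routing G') {x y : V × V'}
    (hxy : x.2 = y.2) :
    edgeLoad (R.boxProd R') s(x, y) ≤ Fintype.card V' * edgeLoad R s(x.1, y.1) := by
  rw [mul_comm, edgeLoad, edgeLoad, ← Finset.card_univ, ← Finset.card_product]
  refine Finset.card_le_card_of_surjOn (fun r => ((r.1.1, x.2), (r.1.2, r.2))) ?_
  rintro ⟨p, q⟩ hpq
  simp only [Finset.coe_filter, Finset.mem_univ, true_and, Set.mem_ofPred_eq] at hpq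
  rcases R.mem_edges_boxProd R' hpq.2 with ⟨hp, -, he⟩ | ⟨-, -, he⟩
  · refine ⟨((p.1, q.1), q.2), ?_, by simp [hp]⟩
    simp [R.ne_of_mem_edges he, he]
  · exact absurd hxy (Walk.adj_of_mem_edges _ he).ne

lemma edgeLoad_boxProd_le_of_snd_ne (R : Routing G) (R' : Routing G') {x y : V × V'}
    (hxy : x.2 ≠ y.2) :
    edgeLoad (R.boxProd R') s(x, y) ≤ Fintype.card V * edgeLoad R' s(x.2, y.2) := by
  rw [edgeLoad, edgeLoad, ← Finset.card_univ, ← Finset.card_product]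
  refine Finset.card_le_card_of_surjOn (fun r => ((r.1, r.2.1), (x.1, r.2.2))) ?_
  rintro ⟨p, q⟩ hpq
  simp only [Finset.coe_filter, Finset.mem_univ, true_and, Set.mem_ofPred_eq] at hpq
  rcases R.mem_edges_boxProd R' hpq.2 with ⟨hx, hy, -⟩ | ⟨hq, -, he⟩
  · exact absurd (hx.trans hy.symm) hxy
  · refine ⟨(p.1, (p.2, q.2)), ?_, by simp [hq]⟩
    simp [R'.ne_of_mem_edges he, he]

lemma routingEdgeIndex_boxProd_le (R : Routing G) (R' : Routing G') :
    routingEdgeIndex (R.boxProd R') ≤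
      max (Fintype.card V * routingEdgeIndex R') (Fintype.card V' * routingEdgeIndex R) := by
  refine Finset.sup_le fun e _ => ?_
  induction e using Sym2.ind with | _ x y => ?_
  by_cases hxy : x.2 = y.2
  · refine le_max_of_le_right ((edgeLoad_boxProd_le_of_snd_eq R R' hxy).trans ?_)
    exact Nat.mul_le_mul_left _ (edgeLoad_le_routingEdgeIndex R _)
  · refine le_max_of_le_left ((edgeLoad_boxProd_le_of_snd_ne R R' hxy).trans ?_)
    exact Nat.mul_le_mul_left _ (edgeLoad_le_routingEdgeIndex R' _)

end Forwarding

/-- For connected graphs `G`, `G'` of orders `n`, `n'`,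
`π(G □ G') ≤ max{n·π(G'), n'·π(G)}`. -/
theorem pi_boxProd_upper_bound {V V' : Type*} [Fintype V] [DecidableEq V]
    [Fintype V'] [DecidableEq V'] (G : SimpleGraph V) (G' : SimpleGraph V')
    (hG : G.Connected) (hG' : G'.Connected) :
    Forwarding.piIdx (G.boxProd G') ≤
      max (Fintype.card V * Forwarding.piIdx G')
        (Fintype.card V' * Forwarding.piIdx G) := by
  obtain ⟨R, hR⟩ := Forwarding.exists_routingEdgeIndex_eq_piIdx hG
  obtain ⟨R', hR'⟩ := Forwarding.exists_routingEdgeIndex_eq_piIdx hG'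
  calc Forwarding.piIdx (G.boxProd G')
      ≤ Forwarding.routingEdgeIndex (R.boxProd R') := Forwarding.piIdx_le_routingEdgeIndex _
    _ ≤ _ := Forwarding.routingEdgeIndex_boxProd_le R R'
    _ = _ := by rw [hR, hR']
end

section
/- If G is a 2-connected simple graph on n vertices, then 2·ξ(G) ≤ (n−2)(n−3), i.e., ξ(G) ≤ (n−2)(n−3)/2. -/
/-!
Any two vertices `u ≠ v` of a 2-connected graph are joined by two internally disjoint paths
(Whitney). Induct along a walk `v, w, …, u`: given such paths `P₁, P₂` from `u` to `w`, follow a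
path from `v` avoiding `w` until it first meets the cycle `P₁ ∪ P₂`, say at `y ∈ P₁`; then
`P₁[u, y]` followed by that path, and `P₂` followed by the edge `wv`, work for `u` and `v`.

Route `u → v` along one of the two paths and `v → u` along the other, and adjacent vertices along
their edge. A vertex `x` is then internal to at most one of the two routes between `u` and `v`,
and only if `u, v` are non-adjacent vertices of `G - x`. So `2 ξ_x` is at most the number of
ordered non-adjacent pairs of `G - x`, which is `(n-1)(n-2)` minus twice the number of edges of
the connected graph `G - x`, hence at most `(n-1)(n-2) - 2(n-2) = (n-2)(n-3)`.
-/

open Finset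

/-- `G` is `k`-connected: `n > k` and removing any set of fewer than `k`
vertices leaves a connected induced subgraph. -/
def IsKConnected {V : Type*} [Fintype V] (k : ℕ) (G : SimpleGraph V) : Prop :=
  k < Fintype.card V ∧
    ∀ s : Finset V, s.card < k → (G.induce ((↑s : Set V)ᶜ)).Connected

namespace SimpleGraph

variable {V : Type*} {G : SimpleGraph V}

namespace Walk

def InternallyDisjoint {u v : V} (p q : G.Walk u v) : Prop :=
  ∀ z ∈ p.support, z ∈ q.support → z = u ∨ z = v

lemma InternallyDisjoint.symm {u v : V} {p q : G.Walk u v} (h : p.InternallyDisjoint q) :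
    q.InternallyDisjoint p :=
  fun z hq hp ↦ h z hp hq

lemma InternallyDisjoint.reverse {u v : V} {p q : G.Walk u v} (h : p.InternallyDisjoint q) :
    p.reverse.InternallyDisjoint q.reverse := by
  intro z hp hq
  rw [support_reverse, List.mem_reverse] at hp hq
  exact (h z hp hq).symm

lemma IsPath.append {u v w : V} {p : G.Walk u v} {q : G.Walk v w}
    (hp : p.IsPath) (hq : q.IsPath) (h : ∀ z ∈ p.support, z ∈ q.support → z = v) :
    (p.append q).IsPath := by
  rw [isPath_def, support_append]
  refine hp.support_nodup.append ((isPath_def _).mp hq).tail fun z hzp hzq ↦ ?_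
  obtain rfl := h z hzp (List.mem_of_mem_tail hzq)
  have := hq.support_nodup
  rw [← cons_tail_support] at this
  exact (List.nodup_cons.mp this).1 hzq

end Walk

variable [DecidableEq V]

lemma exists_isPath_notMem_support {w u v : V} (h : (G.induce {w}ᶜ).Connected)
    (hu : u ≠ w) (hv : v ≠ w) : ∃ p : G.Walk u v, p.IsPath ∧ w ∉ p.support := by
  obtain ⟨q⟩ := h ⟨u, hu⟩ ⟨v, hv⟩
  let p := q.map (Embedding.induce {w}ᶜ).toHom
  have hw : w ∉ p.support := by
    simp only [p, Walk.support_map, List.mem_map, not_exists, not_and]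
    exact fun z _ ↦ z.2
  exact ⟨p.bypass, p.bypass_isPath, fun h ↦ hw (p.support_bypass_subset_support h)⟩

lemma exists_internallyDisjoint_of_adj_of_mem {u v w y : V} (huv : u ≠ v) (hwv : G.Adj w v)
    {P₁ P₂ : G.Walk u w} (hP₁ : P₁.IsPath) (hP₂ : P₂.IsPath) (hP : P₁.InternallyDisjoint P₂)
    (hy : y ∈ P₁.support) {Q : G.Walk v y} (hQ : Q.IsPath) (hwQ : w ∉ Q.support)
    (hQP : ∀ z ∈ Q.support, z ∈ P₁.support ∨ z ∈ P₂.support → z = y) :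
    ∃ p q : G.Walk u v, p.IsPath ∧ q.IsPath ∧ p.InternallyDisjoint q := by
  have hyw : y ≠ w := fun h ↦ hwQ (h ▸ Q.end_mem_support)
  have hwA : w ∉ (P₁.takeUntil y hy).support :=
    Walk.endpoint_notMem_support_takeUntil hP₁ hy hyw.symm
  have hyP₂ : y ∈ P₂.support → y = u := fun h ↦ (hP y hy h).resolve_right hyw
  have hvP₂ : v ∉ P₂.support := fun h ↦ by
    obtain rfl := hQP v Q.start_mem_support (.inr h)
    exact huv (hyP₂ h).symm
  refine ⟨(P₁.takeUntil y hy).append Q.reverse, P₂.concat hwv, ?_, hP₂.concat hvP₂ hwv, ?_⟩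
  · refine (hP₁.takeUntil hy).append hQ.reverse fun z hz₁ hz₂ ↦ ?_
    rw [Walk.support_reverse, List.mem_reverse] at hz₂
    exact hQP z hz₂ (.inl (P₁.support_takeUntil_subset_support hy hz₁))
  · intro z hzp hzq
    rw [Walk.support_concat, List.mem_append, List.mem_singleton] at hzq
    obtain hzq | rfl := hzq
    · rw [Walk.mem_support_append_iff, Walk.support_reverse, List.mem_reverse] at hzp
      obtain hzp | hzp := hzp
      · exact (hP z (P₁.support_takeUntil_subset_support hy hzp) hzq).imp id
          fun h ↦ absurd (h ▸ hzp) hwA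
      · obtain rfl := hQP z hzp (.inr hzq)
        exact .inl (hyP₂ hzq)
    · exact .inr rfl

lemma exists_internallyDisjoint_of_adj {u v w : V} (hw : (G.induce {w}ᶜ).Connected)
    (huv : u ≠ v) (huw : u ≠ w) (hwv : G.Adj w v) {P₁ P₂ : G.Walk u w} (hP₁ : P₁.IsPath)
    (hP₂ : P₂.IsPath) (hP : P₁.InternallyDisjoint P₂) :
    ∃ p q : G.Walk u v, p.IsPath ∧ q.IsPath ∧ p.InternallyDisjoint q := by
  obtain ⟨Q, hQ, hwQ⟩ := exists_isPath_notMem_support hw hwv.ne.symm huw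
  -- the first vertex of `Q` on the cycle `P₁ ∪ P₂`
  obtain ⟨y, hyS, hyQ, hfirst⟩ := Q.exists_mem_support_forall_mem_support_imp_eq
    (P₁.support ++ P₂.support).toFinset ⟨u, by simp⟩
  have hQP : ∀ z ∈ (Q.takeUntil y hyQ).support,
      z ∈ P₁.support ∨ z ∈ P₂.support → z = y := fun z hz hzP ↦
    hfirst z (by simpa using hzP) hz
  have hwQ' : w ∉ (Q.takeUntil y hyQ).support :=
    fun h ↦ hwQ (Q.support_takeUntil_subset_support hyQ h)
  obtain hy | hy := List.mem_append.mp (List.mem_toFinset.mp hyS)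
  · exact exists_internallyDisjoint_of_adj_of_mem huv hwv hP₁ hP₂ hP hy (hQ.takeUntil hyQ) hwQ'
      hQP
  · exact exists_internallyDisjoint_of_adj_of_mem huv hwv hP₂ hP₁ hP.symm hy (hQ.takeUntil hyQ)
      hwQ' fun z hz hzP ↦ hQP z hz hzP.symm

theorem exists_internallyDisjoint_isPaths (hG : G.Connected)
    (hcut : ∀ w, (G.induce {w}ᶜ).Connected) (u v : V) :
    ∃ p q : G.Walk u v, p.IsPath ∧ q.IsPath ∧ p.InternallyDisjoint q := by
  obtain ⟨W⟩ := hG.preconnected v u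
  induction W with
  | nil => exact ⟨.nil, .nil, .nil, .nil, by simp [Walk.InternallyDisjoint]⟩
  | @cons v w u hvw W ih =>
    by_cases huv : u = v
    · subst huv
      exact ⟨.nil, .nil, .nil, .nil, by simp [Walk.InternallyDisjoint]⟩
    by_cases huw : u = w
    · subst huw
      exact ⟨hvw.symm.toWalk, hvw.symm.toWalk, hvw.symm.isPath_toWalk,
        hvw.symm.isPath_toWalk, by simp [Walk.InternallyDisjoint]⟩
    obtain ⟨P₁, P₂, hP₁, hP₂, hP⟩ := ih
    exact exists_internallyDisjoint_of_adj (hcut w) huv huw hvw.symm hP₁ hP₂ hP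

end SimpleGraph

lemma IsKConnected.connected {V : Type*} [Fintype V] {k : ℕ} {G : SimpleGraph V}
    (h : IsKConnected k G) (hk : 0 < k) : G.Connected := by
  have := h.2 ∅ (by simpa using hk)
  rw [Finset.coe_empty, Set.compl_empty] at this
  exact (SimpleGraph.induceUnivIso G).connected_iff.mp this

lemma IsKConnected.connected_induce_compl_singleton {V : Type*} [Fintype V] {k : ℕ}
    {G : SimpleGraph V} (h : IsKConnected k G) (hk : 1 < k) (w : V) :
    (G.induce {w}ᶜ).Connected := by
  have := h.2 {w} (by simpa using hk)
  rwa [Finset.coe_singleton] at this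

namespace Forwarding

open SimpleGraph

variable {V : Type*} {G : SimpleGraph V}

structure Routing.IsCyclic (R : Routing G) : Prop where
  walk_eq_toWalk : ∀ u v (huv : G.Adj u v), R.walk u v = huv.toWalk
  internallyDisjoint : ∀ u v, u ≠ v → (R.walk u v).InternallyDisjoint (R.walk v u).reverse

lemma exists_isCyclic_routing
    (h : ∀ u v : V, ∃ p q : G.Walk u v, p.IsPath ∧ q.IsPath ∧ p.InternallyDisjoint q) :
    ∃ R : Routing G, R.IsCyclic := by
  classical
  choose p q hp hq hpq using h
  -- orienting each pair makes `u → v` and `v → u` use the two paths of the same pair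
  let : LinearOrder V := IsWellOrder.linearOrder WellOrderingRel
  let walk u v : G.Walk u v :=
    if huv : G.Adj u v then huv.toWalk else if u < v then p u v else (q v u).reverse
  refine ⟨⟨walk, fun u v ↦ ?_⟩, fun u v huv ↦ by simp [walk, huv], fun u v hne ↦ ?_⟩
  · unfold walk
    split_ifs
    exacts [Adj.isPath_toWalk _, hp u v, (hq v u).reverse]
  · by_cases huv : G.Adj u v
    · simp [walk, huv, Walk.InternallyDisjoint]
    have hvu : ¬G.Adj v u := fun h ↦ huv h.symm
    obtain hlt | hlt := hne.lt_or_gt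
    · simpa [walk, huv, hvu, hlt, hlt.not_gt] using hpq u v
    · simpa [walk, huv, hvu, hlt, hlt.not_gt] using (hpq v u).reverse.symm

variable [Fintype V] [DecidableEq V]

lemma Routing.IsCyclic.two_mul_vertexLoad_le_card_not_adj [DecidableRel G.Adj] {R : Routing G}
    (hR : R.IsCyclic) (x : V) :
    2 * vertexLoad R x ≤ #{p ∈ (univ.erase x).offDiag | ¬G.Adj p.1 p.2} := by
  set F : Finset (V × V) :=
    {p | p.1 ≠ p.2 ∧ x ∈ (R.walk p.1 p.2).support ∧ x ≠ p.1 ∧ x ≠ p.2} with hF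
  have hnotAdj : ∀ p ∈ F, ¬G.Adj p.1 p.2 := by
    rintro ⟨u, v⟩ hp huv
    simp [hF, hR.walk_eq_toWalk u v huv] at hp
    tauto
  have hsub : F ⊆ {p ∈ (univ.erase x).offDiag | ¬G.Adj p.1 p.2} := fun p hp ↦ by
    have := hnotAdj p hp
    simp only [hF, mem_filter, mem_univ, true_and] at hp
    simp [mem_offDiag, *, Ne.symm]
  have hswap : F.map (Equiv.prodComm V V).toEmbedding ⊆
      {p ∈ (univ.erase x).offDiag | ¬G.Adj p.1 p.2} := by
    simp only [subset_iff, mem_map_equiv, mem_filter, mem_offDiag, mem_erase, mem_univ]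
    intro p hp
    have := hnotAdj _ hp
    simp only [hF, mem_filter, mem_univ, true_and] at hp
    simp_all [Ne.symm, G.adj_comm]
  have hdisjF : Disjoint F (F.map (Equiv.prodComm V V).toEmbedding) := by
    simp only [Finset.disjoint_left, mem_map_equiv]
    rintro ⟨u, v⟩ huv hvu
    simp only [hF, mem_filter, mem_univ, true_and, Equiv.prodComm_symm,
      Equiv.prodComm_apply, Prod.swap] at huv hvu
    have := hR.internallyDisjoint u v huv.1 x huv.2.1 (by simpa using hvu.2.1)
    tauto
  calc 2 * vertexLoad R x = #F + #(F.map (Equiv.prodComm V V).toEmbedding) := by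
        rw [card_map, two_mul]; rfl
    _ = #(F ∪ F.map (Equiv.prodComm V V).toEmbedding) := (card_union_of_disjoint hdisjF).symm
    _ ≤ _ := card_le_card (union_subset hsub hswap)

lemma two_mul_card_sub_two_le_card_adj [DecidableRel G.Adj] {x : V}
    (hx : (G.induce {x}ᶜ).Connected) :
    2 * (Fintype.card V - 2) ≤ #{p ∈ (univ.erase x).offDiag | G.Adj p.1 p.2} := by
  classical
  have hedges := hx.card_vert_le_card_edgeSet_add_one
  rw [Nat.card_eq_fintype_card, Fintype.card_compl_set, Set.card_singleton,
    Nat.card_eq_fintype_card, ← edgeFinset_card] at hedges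
  calc 2 * (Fintype.card V - 2) ≤ 2 * #(G.induce {x}ᶜ).edgeFinset := by omega
    _ = Fintype.card (G.induce {x}ᶜ).Dart := (dart_card_eq_twice_card_edges _).symm
    _ ≤ _ := by
      rw [← card_univ]
      refine card_le_card_of_injOn (fun d ↦ (d.fst.1, d.snd.1)) (fun d _ ↦ ?_)
        fun d _ d' _ h ↦ ?_
      · have hfst : d.fst.1 ≠ x := d.fst.2
        have hsnd : d.snd.1 ≠ x := d.snd.2
        simpa [mem_offDiag, hfst, hsnd] using ⟨d.adj.ne ∘ Subtype.ext, d.adj⟩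
      · exact Dart.ext _ _ (Prod.ext (Subtype.ext congr($h.1)) (Subtype.ext congr($h.2)))

lemma Routing.IsCyclic.two_mul_vertexLoad_le {R : Routing G} (hR : R.IsCyclic) {x : V}
    (hx : (G.induce {x}ᶜ).Connected) :
    2 * vertexLoad R x ≤ (Fintype.card V - 2) * (Fintype.card V - 3) := by
  classical
  have hload := hR.two_mul_vertexLoad_le_card_not_adj x
  have hadjc := two_mul_card_sub_two_le_card_adj hx
  have hsplit := card_filter_add_card_filter_not (s := (univ.erase x).offDiag)
    (p := fun p : V × V ↦ G.Adj p.1 p.2)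
  rw [offDiag_card, card_erase_of_mem (mem_univ x), card_univ] at hsplit
  have key : ∀ n : ℕ, (n - 1) * (n - 1) - (n - 1) = (n - 2) * (n - 3) + 2 * (n - 2)
    | 0 | 1 | 2 => rfl
    | m + 3 => Nat.sub_eq_of_eq_add
        (show (m + 2) * (m + 2) = (m + 1) * m + 2 * (m + 1) + (m + 2) by ring)
  have := key (Fintype.card V)
  omega

lemma Routing.IsCyclic.two_mul_routingVertexIndex_le {R : Routing G} (hR : R.IsCyclic)
    (hcut : ∀ x, (G.induce {x}ᶜ).Connected) :
    2 * routingVertexIndex R ≤ (Fintype.card V - 2) * (Fintype.card V - 3) := by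
  have hsup : routingVertexIndex R ≤ (Fintype.card V - 2) * (Fintype.card V - 3) / 2 :=
    Finset.sup_le fun x _ ↦ (Nat.le_div_iff_mul_le two_pos).2 <|
      (mul_comm _ _).trans_le (hR.two_mul_vertexLoad_le (hcut x))
  omega

end Forwarding

/-- If `G` is a `2`-connected graph on `n` vertices, then
`2ξ(G) ≤ (n-2)(n-3)`. -/
theorem xi_two_connected {V : Type*} [Fintype V] [DecidableEq V]
    (G : SimpleGraph V) (hG : IsKConnected 2 G) :
    2 * Forwarding.xi G ≤ (Fintype.card V - 2) * (Fintype.card V - 3) := by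
  have hcut := hG.connected_induce_compl_singleton one_lt_two
  obtain ⟨R, hR⟩ := Forwarding.exists_isCyclic_routing
    (G.exists_internallyDisjoint_isPaths (hG.connected two_pos) hcut)
  calc 2 * Forwarding.xi G ≤ 2 * Forwarding.routingVertexIndex R :=
        Nat.mul_le_mul_left 2 (Nat.sInf_le ⟨R, rfl⟩)
    _ ≤ _ := hR.two_mul_routingVertexIndex_le hcut
end

section
/- Let k ≥ 3 and let G be a k-connected simple graph on n vertices with n ≥ 8k − 10. Then ξ(G) ≤ n² − (2k+1)n + 2k. -/
open Finset

/-!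
Split `V` into two halves `A`, `Aᶜ` of sizes `⌈n/2⌉` and `⌊n/2⌋` that both induce connected
subgraphs, and route adjacent pairs along their edge and pairs inside one half through that half.
A vertex `x` is then internal to none of the `c(c-1)` paths inside the half `C` not containing
`x`, nor to the at least `(n-c-1)(k-1)` one-edge paths leaving the other vertices of its own half
(`k`-connectivity forces minimum degree `k`). For `c ≥ ⌊n/2⌋` and `n ≥ 8k-10` this leaves at most
`(n-1)(n-2k) = n² - (2k+1)n + 2k` of the `(n-1)(n-2)` pairs avoiding `x` as endpoint.

Such halves exist in every 2-connected graph, by growing `A` one vertex at a time: fix `t ∉ A` and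
move into `A` the neighbour `u ∉ A` of `A` that is farthest from `t` inside `Aᶜ`. A piece of
`Aᶜ - u` cut off from `t` would, since `G - u` is connected, contain a neighbour of `A`, and all
its walks to `t` inside `Aᶜ` pass through `u`, so it would be even farther from `t`.
-/

namespace SimpleGraph

variable {V : Type*} {G : SimpleGraph V}

lemma preconnected_induce_iff_exists_walk {S : Set V} :
    (G.induce S).Preconnected ↔
      ∀ x ∈ S, ∀ y ∈ S, ∃ w : G.Walk x y, ∀ z ∈ w.support, z ∈ S := by
  refine ⟨fun h x hx y hy => ?_, fun h x y => ?_⟩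
  · obtain ⟨w⟩ := h ⟨x, hx⟩ ⟨y, hy⟩
    refine ⟨w.map (Embedding.induce S).toHom, fun z hz => ?_⟩
    obtain ⟨z, -, rfl⟩ := List.mem_map.1 (Walk.support_map _ w ▸ hz)
    exact z.2
  · obtain ⟨w, hw⟩ := h x x.2 y y.2
    exact ⟨w.induce S hw⟩

lemma preconnected_induce_of_forall_exists_walk {S : Set V} (t : V)
    (h : ∀ y ∈ S, ∃ w : G.Walk y t, ∀ z ∈ w.support, z ∈ S) : (G.induce S).Preconnected := by
  refine preconnected_induce_iff_exists_walk.2 fun x hx y hy => ?_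
  obtain ⟨wx, hwx⟩ := h x hx
  obtain ⟨wy, hwy⟩ := h y hy
  refine ⟨wx.append wy.reverse, fun z hz => ?_⟩
  rw [Walk.mem_support_append_iff, Walk.support_reverse, List.mem_reverse] at hz
  exact hz.elim (hwx z) (hwy z)

lemma exists_adj_mem_notMem_of_preconnected_induce {S Y : Set V}
    (hS : (G.induce S).Preconnected) {y a : V} (hy : y ∈ S) (hyY : y ∈ Y) (ha : a ∈ S)
    (haY : a ∉ Y) : ∃ b c, G.Adj b c ∧ b ∈ Y ∧ c ∈ S ∧ c ∉ Y := by
  obtain ⟨w, hw⟩ := preconnected_induce_iff_exists_walk.1 hS y hy a ha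
  obtain ⟨d, hd, hdY, hdY'⟩ := w.exists_boundary_dart Y hyY haY
  exact ⟨d.fst, d.snd, d.adj, hdY, hw _ (w.dart_snd_mem_support_of_mem_darts hd), hdY'⟩

/-- The length of a shortest walk from `x` to `y` inside `S`; it is `0` if there is none. -/
noncomputable def distWithin (G : SimpleGraph V) (S : Set V) (x y : V) : ℕ :=
  sInf {n | ∃ w : G.Walk x y, (∀ z ∈ w.support, z ∈ S) ∧ w.length = n}

lemma distWithin_le_length {S : Set V} {x y : V} (w : G.Walk x y)
    (hw : ∀ z ∈ w.support, z ∈ S) : G.distWithin S x y ≤ w.length :=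
  Nat.sInf_le ⟨w, hw, rfl⟩

lemma exists_walk_length_eq_distWithin {S : Set V} {x y : V}
    (h : ∃ w : G.Walk x y, ∀ z ∈ w.support, z ∈ S) :
    ∃ w : G.Walk x y, (∀ z ∈ w.support, z ∈ S) ∧ w.length = G.distWithin S x y := by
  obtain ⟨w, hw⟩ := h
  exact Nat.sInf_mem (s := {n | ∃ w : G.Walk x y, (∀ z ∈ w.support, z ∈ S) ∧ w.length = n})
    ⟨_, w, hw, rfl⟩

lemma preconnected_induce_diff_singleton [DecidableEq V] {H : Set V} {u t a : V}
    (hGu : (G.induce {u}ᶜ).Preconnected) (hH : (G.induce H).Preconnected)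
    (hu : u ∈ H) (ht : t ∈ H) (ha : a ∉ H)
    (hmax : ∀ y ∈ H, ∀ c ∉ H, G.Adj y c → G.distWithin H y t ≤ G.distWithin H u t) :
    (G.induce (H \ {u})).Preconnected := by
  refine preconnected_induce_of_forall_exists_walk t fun y₀ hy₀ => ?_
  by_contra hy₀t
  set Y := {y | y ∈ H \ {u} ∧ ¬∃ w : G.Walk y t, ∀ z ∈ w.support, z ∈ H \ {u}}
  obtain ⟨b, c, hbc, ⟨hb, hbt⟩, hcu, hcY⟩ := exists_adj_mem_notMem_of_preconnected_induce
    (Y := Y) hGu hy₀.2 ⟨hy₀, hy₀t⟩ (by rintro rfl; exact ha hu) fun haY => ha haY.1.1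
  have hc : c ∉ H := by
    intro hc
    have : ∃ w : G.Walk c t, ∀ z ∈ w.support, z ∈ H \ {u} := by
      by_contra hct
      exact hcY ⟨⟨hc, hcu⟩, hct⟩
    obtain ⟨w, hw⟩ := this
    refine hbt ⟨w.cons hbc, fun z hz => ?_⟩
    rw [Walk.support_cons, List.mem_cons] at hz
    rcases hz with rfl | hz
    exacts [hb, hw z hz]
  obtain ⟨w, hwH, hw⟩ := exists_walk_length_eq_distWithin
    (preconnected_induce_iff_exists_walk.1 hH b hb.1 t ht)
  have huw : u ∈ w.support := by
    by_contra huw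
    exact hbt ⟨w, fun z hz => ⟨hwH z hz, fun hzu => huw (hzu ▸ hz)⟩⟩
  have htake : (w.takeUntil u huw).length ≠ 0 := fun h0 =>
    hb.2 (Walk.eq_of_length_eq_zero h0)
  have hdrop : G.distWithin H u t ≤ (w.dropUntil u huw).length :=
    distWithin_le_length _ fun z hz => hwH z (w.support_dropUntil_subset_support huw hz)
  have hsplit := congrArg Walk.length (w.take_spec huw)
  rw [Walk.length_append] at hsplit
  have := hmax b hb.1 c hc hbc
  omega

lemma exists_insert_preconnected_induce [Fintype V] [DecidableEq V] (hG : G.Connected)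
    (hG2 : ∀ u, (G.induce {u}ᶜ).Preconnected) {A : Finset V}
    (hA : (G.induce ↑A).Preconnected) (hAc : (G.induce (↑A)ᶜ).Preconnected)
    {a t : V} (ha : a ∈ A) (ht : t ∉ A) :
    ∃ u ∉ A, (G.induce ↑(insert u A)).Preconnected ∧
      (G.induce (↑(insert u A))ᶜ).Preconnected := by
  classical
  set N := univ.filter fun y => y ∉ A ∧ ∃ b ∈ A, G.Adj y b
  have hN : N.Nonempty := by
    obtain ⟨w⟩ := hG.preconnected a t
    obtain ⟨d, -, hd, hd'⟩ := w.exists_boundary_dart ↑A ha ht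
    exact ⟨d.snd, mem_filter.2 ⟨mem_univ _, hd', d.fst, hd, d.adj.symm⟩⟩
  obtain ⟨u, hu, hmax⟩ := N.exists_max_image (fun y => G.distWithin (↑A)ᶜ y t) hN
  obtain ⟨-, huA, b, hb, hub⟩ := mem_filter.1 hu
  refine ⟨u, huA, ?_, ?_⟩
  · rw [coe_insert, Set.insert_eq, Set.union_comm]
    exact (connected_induce_union (t := {u}) hA .of_subsingleton hb rfl hub.symm).preconnected
  · rw [← coe_compl, compl_insert, coe_erase, coe_compl]
    refine preconnected_induce_diff_singleton (hG2 u) hAc huA ht (a := a) (by simpa) ?_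
    intro y hy c hc hyc
    exact hmax y (mem_filter.2 ⟨mem_univ _, hy, c, by simpa using hc, hyc⟩)

lemma exists_walk_adj_or_within (hG : G.Connected) {A : Set V} (hA : (G.induce A).Preconnected)
    (hAc : (G.induce Aᶜ).Preconnected) (x y : V) :
    ∃ w : G.Walk x y, (G.Adj x y → ∀ z ∈ w.support, z = x ∨ z = y) ∧
      (x ∈ A → y ∈ A → ∀ z ∈ w.support, z ∈ A) ∧
      (x ∈ Aᶜ → y ∈ Aᶜ → ∀ z ∈ w.support, z ∈ Aᶜ) := by
  by_cases hxy : G.Adj x y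
  · have hw : ∀ z ∈ hxy.toWalk.support, z = x ∨ z = y := by simp
    refine ⟨hxy.toWalk, fun _ => hw, fun hx hy z hz => ?_, fun hx hy z hz => ?_⟩ <;>
      rcases hw z hz with rfl | rfl <;> assumption
  by_cases hx : x ∈ A <;> by_cases hy : y ∈ A
  · obtain ⟨w, hw⟩ := preconnected_induce_iff_exists_walk.1 hA x hx y hy
    exact ⟨w, hxy.elim, fun _ _ => hw, fun h => (h hx).elim⟩
  · exact ⟨(hG.preconnected x y).some, hxy.elim, fun _ h => (hy h).elim, fun h => (h hx).elim⟩
  · exact ⟨(hG.preconnected x y).some, hxy.elim, fun h => (hx h).elim, fun _ h => (h hy).elim⟩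
  · obtain ⟨w, hw⟩ := preconnected_induce_iff_exists_walk.1 hAc x hx y hy
    exact ⟨w, hxy.elim, fun h => (hx h).elim, fun _ _ => hw⟩

end SimpleGraph

open SimpleGraph

namespace IsKConnected

variable {V : Type*} [Fintype V] {G : SimpleGraph V} {k : ℕ}

lemma mono (hG : IsKConnected k G) {j : ℕ} (hjk : j ≤ k) : IsKConnected j G :=
  ⟨hG.1.trans_le' hjk, fun s hs => hG.2 s (hs.trans_le hjk)⟩

lemma preconnected_induce_compl (hG : IsKConnected k G) {s : Finset V} (hs : #s < k) :
    (G.induce (↑s)ᶜ).Preconnected :=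
  (hG.2 s hs).preconnected

lemma connected_s13 (hG : IsKConnected k G) (hk : 0 < k) : G.Connected := by
  have h := hG.2 ∅ (by simpa using hk)
  rw [coe_empty, Set.compl_empty] at h
  exact (induceUnivIso G).connected_iff.1 h

lemma le_degree [DecidableEq V] [DecidableRel G.Adj] (hG : IsKConnected k G) (v : V) :
    k ≤ G.degree v := by
  by_contra! hv
  obtain ⟨u, -, hu⟩ := exists_mem_notMem_of_card_lt_card (s := insert v (G.neighborFinset v))
    (t := univ) <| (card_insert_le _ _).trans_lt <| by
      rw [card_neighborFinset_eq_degree, card_univ]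
      have := hG.1
      omega
  rw [mem_insert, not_or] at hu
  obtain ⟨w, hw⟩ := preconnected_induce_iff_exists_walk.1
    (hG.preconnected_induce_compl (s := G.neighborFinset v)
      (by rwa [card_neighborFinset_eq_degree])) v (by simp) u (by simpa using hu.2)
  obtain ⟨d, hd, rfl, hd'⟩ := w.exists_boundary_dart {v} rfl hu.1
  exact hw _ (w.dart_snd_mem_support_of_mem_darts hd) (by simp [d.adj])

theorem exists_preconnected_induce_partition (hG : IsKConnected 2 G) {a : ℕ} (ha : 1 ≤ a)
    (haV : a < Fintype.card V) :
    ∃ A : Finset V, #A = a ∧ (G.induce ↑A).Preconnected ∧ (G.induce (↑A)ᶜ).Preconnected := by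
  classical
  have hG2 (u : V) : (G.induce {u}ᶜ).Preconnected := by
    have := hG.preconnected_induce_compl (s := {u}) (by simp)
    rwa [coe_singleton] at this
  induction a, ha using Nat.le_induction with
  | base =>
    obtain ⟨v⟩ : Nonempty V := Fintype.card_pos_iff.1 (by omega)
    refine ⟨{v}, card_singleton v, ?_, ?_⟩ <;> rw [coe_singleton]
    exacts [.of_subsingleton, hG2 v]
  | succ a ha ih =>
    obtain ⟨A, rfl, hA, hAc⟩ := ih (by omega)
    obtain ⟨x, hx⟩ := card_pos.1 ha
    obtain ⟨t, -, ht⟩ := exists_mem_notMem_of_card_lt_card (s := A) (t := univ)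
      (by rw [card_univ]; omega)
    obtain ⟨u, hu, h⟩ :=
      exists_insert_preconnected_induce (hG.connected_s13 (by omega)) hG2 hA hAc hx ht
    exact ⟨insert u A, card_insert_of_notMem hu, h⟩

end IsKConnected

namespace Forwarding

variable {V : Type*} [DecidableEq V] {G : SimpleGraph V}

lemma exists_xi_le_vertexLoad [Fintype V] [Nonempty V] (R : Routing G) :
    ∃ x, xi G ≤ vertexLoad R x := by
  obtain ⟨x, -, hx⟩ := exists_mem_eq_sup univ univ_nonempty (vertexLoad R)
  have h : xi G ≤ routingVertexIndex R := Nat.sInf_le ⟨R, rfl⟩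
  exact ⟨x, h.trans_eq hx⟩

lemma exists_routing_adj_or_within (hG : G.Connected) {A : Set V}
    (hA : (G.induce A).Preconnected) (hAc : (G.induce Aᶜ).Preconnected) :
    ∃ R : Routing G, (∀ x y, G.Adj x y → ∀ z ∈ (R.walk x y).support, z = x ∨ z = y) ∧
      (∀ x ∈ A, ∀ y ∈ A, ∀ z ∈ (R.walk x y).support, z ∈ A) ∧
      (∀ x ∈ Aᶜ, ∀ y ∈ Aᶜ, ∀ z ∈ (R.walk x y).support, z ∈ Aᶜ) := by
  choose w hwG hwA hwAc using exists_walk_adj_or_within hG hA hAc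
  have hsub (x y : V) : ∀ z ∈ (w x y).bypass.support, z ∈ (w x y).support :=
    fun _ hz => (w x y).support_bypass_subset_support hz
  exact ⟨⟨fun x y => (w x y).bypass, fun x y => (w x y).bypass_isPath⟩,
    fun x y h z hz => hwG x y h z (hsub x y z hz),
    fun x hx y hy z hz => hwA x y hx hy z (hsub x y z hz),
    fun x hx y hy z hz => hwAc x y hx hy z (hsub x y z hz)⟩

lemma vertexLoad_add_le [Fintype V] [DecidableRel G.Adj] (R : Routing G) {C : Finset V} {x : V}
    {d : ℕ} (hx : x ∉ C) (hdeg : ∀ v, d ≤ G.degree v)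
    (hRC : ∀ u ∈ C, ∀ v ∈ C, x ∉ (R.walk u v).support)
    (hRadj : ∀ u v, G.Adj u v → ∀ z ∈ (R.walk u v).support, z = u ∨ z = v) :
    vertexLoad R x + (#C * #C - #C) + (#Cᶜ - 1) * (d - 1) ≤
      (Fintype.card V - 1) * (Fintype.card V - 1) - (Fintype.card V - 1) := by
  set L := univ.filter fun p : V × V =>
    p.1 ≠ p.2 ∧ x ∈ (R.walk p.1 p.2).support ∧ x ≠ p.1 ∧ x ≠ p.2
  set E := (Cᶜ.erase x).biUnion fun u => {u} ×ˢ (G.neighborFinset u).erase x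
  have hE : (#Cᶜ - 1) * (d - 1) ≤ #E := by
    rw [card_biUnion, ← card_erase_of_mem (mem_compl.2 hx), ← smul_eq_mul]
    · refine card_nsmul_le_sum _ _ _ fun u _ => ?_
      rw [card_product, card_singleton, one_mul]
      exact (Nat.sub_le_sub_right (hdeg u) 1).trans
        (by simpa using pred_card_le_card_erase (s := G.neighborFinset u) (a := x))
    · intro u _ v _ huv
      simp only [Function.onFun, Finset.disjoint_left, mem_product, mem_singleton]
      exact fun p hu hv => huv (hu.1.symm.trans hv.1)
  have hsub : L ∪ C.offDiag ∪ E ⊆ (univ.erase x).offDiag := by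
    intro p
    simp only [L, E, mem_union, mem_filter, mem_offDiag, mem_biUnion, mem_product, mem_singleton,
      mem_erase, mem_compl, mem_neighborFinset, mem_univ, true_and, and_true]
    rintro ((⟨hp, -, hx1, hx2⟩ | ⟨h1, h2, hp⟩) | ⟨u, ⟨hux, -⟩, rfl, hx2, hadj⟩)
    · exact ⟨Ne.symm hx1, Ne.symm hx2, hp⟩
    · exact ⟨fun h => hx (h ▸ h1), fun h => hx (h ▸ h2), hp⟩
    · exact ⟨hux, hx2, hadj.ne⟩
  have hdisj1 : Disjoint L C.offDiag := by
    simp only [Finset.disjoint_left, L, mem_filter, mem_offDiag]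
    exact fun p ⟨_, _, hxp, _⟩ ⟨h1, h2, _⟩ => hRC _ h1 _ h2 hxp
  have hdisj2 : Disjoint (L ∪ C.offDiag) E := by
    simp only [Finset.disjoint_left, L, E, mem_union, mem_filter, mem_offDiag, mem_biUnion,
      mem_product, mem_singleton, mem_erase, mem_compl, mem_neighborFinset, mem_univ, true_and]
    rintro p (⟨-, hxp, hx1, hx2⟩ | ⟨h1, -⟩) ⟨u, ⟨-, huC⟩, rfl, -, hadj⟩
    · exact (hRadj _ _ hadj x hxp).elim hx1 hx2
    · exact huC h1
  have := card_le_card hsub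
  rw [card_union_of_disjoint hdisj2, card_union_of_disjoint hdisj1, offDiag_card, offDiag_card,
    card_erase_of_mem (mem_univ x), card_univ] at this
  change #L + _ + _ ≤ _
  omega

lemma vertexLoad_le_s13 [Fintype V] [DecidableRel G.Adj] (R : Routing G) {k : ℕ} (hk : 3 ≤ k)
    (hn : 8 * k ≤ Fintype.card V + 10) (hdeg : ∀ v, k ≤ G.degree v) {C : Finset V} {x : V}
    (hx : x ∉ C) (hC : Fintype.card V ≤ 2 * #C + 1)
    (hRC : ∀ u ∈ C, ∀ v ∈ C, ∀ z ∈ (R.walk u v).support, z ∈ C)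
    (hRadj : ∀ u v, G.Adj u v → ∀ z ∈ (R.walk u v).support, z = u ∨ z = v) :
    (vertexLoad R x : ℤ) ≤ (Fintype.card V : ℤ) ^ 2 -
      (2 * (k : ℤ) + 1) * (Fintype.card V : ℤ) + 2 * (k : ℤ) := by
  have hload := vertexLoad_add_le R hx hdeg (fun u hu v hv hxuv => hx (hRC u hu v hv x hxuv))
    hRadj
  have hcard := card_add_card_compl C
  have hCc : 0 < #Cᶜ := card_pos.2 ⟨x, mem_compl.2 hx⟩
  have hCk : 3 * k ≤ #C + 2 := by omega
  have hn1 := Nat.le_mul_self (Fintype.card V - 1)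
  zify [Nat.le_mul_self #C, hn1, hCc, (by omega : 1 ≤ k), (by omega : 1 ≤ Fintype.card V)]
    at hload hcard hCk hC
  -- `c(c-1) - (k-1)(n+c-1) = c(c-3k+2) + (k-1)(2c+1-n)`
  nlinarith [mul_nonneg (Int.natCast_nonneg #C) (by linarith : (0 : ℤ) ≤ #C - 3 * k + 2),
    mul_nonneg (by linarith : (0 : ℤ) ≤ k - 1)
      (by linarith : (0 : ℤ) ≤ 2 * #C + 1 - Fintype.card V)]

end Forwarding

/-- If `k ≥ 3` and `G` is a `k`-connected graph on
`n ≥ 8k - 10` vertices, then `ξ(G) ≤ n² - (2k+1)n + 2k`. -/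
theorem xi_k_connected {V : Type*} [Fintype V] [DecidableEq V]
    (G : SimpleGraph V) (k : ℕ) (hk : 3 ≤ k) (hG : IsKConnected k G)
    (hn : 8 * k - 10 ≤ Fintype.card V) :
    (Forwarding.xi G : ℤ) ≤ (Fintype.card V : ℤ) ^ 2 -
      (2 * (k : ℤ) + 1) * (Fintype.card V : ℤ) + 2 * (k : ℤ) := by
  classical
  set n := Fintype.card V
  obtain ⟨A, hA, hAconn, hAcconn⟩ :=
    (hG.mono (by omega : 2 ≤ k)).exists_preconnected_induce_partition (a := n - n / 2)
      (by omega) (by have := hG.1; omega)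
  obtain ⟨R, hRadj, hRA, hRAc⟩ :=
    Forwarding.exists_routing_adj_or_within (hG.connected_s13 (by omega)) hAconn hAcconn
  have : Nonempty V := Fintype.card_pos_iff.1 (by have := hG.1; omega)
  obtain ⟨x, hx⟩ := Forwarding.exists_xi_le_vertexLoad R
  refine (Nat.cast_le.2 hx).trans ?_
  have hAc : #Aᶜ = n / 2 := by rw [card_compl, hA]; omega
  by_cases hxA : x ∈ A
  · exact Forwarding.vertexLoad_le_s13 R hk (by omega) hG.le_degree (C := Aᶜ) (by simpa) (by omega)
      (fun u hu v hv => by simpa using hRAc u (by simpa using hu) v (by simpa using hv)) hRadj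
  · exact Forwarding.vertexLoad_le_s13 R hk (by omega) hG.le_degree hxA (by omega) hRA hRadj
end
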